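/- The languages L₁ ⊆ A₁*, L₂ ⊆ A₂* are globally mutually normal (O⁻¹(O(P_i⁻¹(L_i))) ∩ P_j⁻¹(L_j) ⊆ P_i⁻¹(L_i) for all i ≠ j) if and only if they are mutually normal (O_i⁻¹(O_i(L_i)) ∩ P_i(P_j⁻¹(L_j)) ⊆ L_i for all i ≠ j). -/

import Mathlib

/-- Natural projection erasing events outside `B`. -/
noncomputable def proj {A : Type*} (B : Set A) (w : List A) : List A :=
  w.filter (fun a => @decide (a ∈ B) (Classical.propDecidable _))

/-- Concatenation of a language with a single event from `B`. -/
def cat {A : Type*} (L : Set (List A)) (B : Set A) : Set (List A) :=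
  {w | ∃ u ∈ L, ∃ a ∈ B, w = u ++ [a]}

/-- A language is prefix-closed. -/
def prefixClosed {A : Type*} (L : Set (List A)) : Prop :=
  ∀ w ∈ L, ∀ u : List A, u <+: w → u ∈ L

/-- `K` is controllable with respect to `L` and uncontrollable events `Au`. -/
def controllable {A : Type*} (K L : Set (List A)) (Au : Set A) : Prop :=
  cat K Au ∩ L ⊆ K

/-- `K` is normal with respect to `L` and observable events `Ao`. -/
def normalLang {A : Type*} (Ao : Set A) (K L : Set (List A)) : Prop :=
  proj Ao ⁻¹' (proj Ao '' K) ∩ L ⊆ K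

/-- Supremal controllable sublanguage of `K` w.r.t. `L` and `Au`. -/
def supC {A : Type*} (K L : Set (List A)) (Au : Set A) : Set (List A) :=
  ⋃₀ {K' | K' ⊆ K ∧ controllable K' L Au}

/-- Supremal normal sublanguage of `K` w.r.t. `L` and `Ao`. -/
def supN {A : Type*} (Ao : Set A) (K L : Set (List A)) : Set (List A) :=
  ⋃₀ {K' | K' ⊆ K ∧ normalLang Ao K' L}

/-!
Both conditions are instances of one equivalence, valid for any languages `L ⊆ B*` and `M`:
`P_B⁻¹ L` is normal with respect to `M` and the observation `O = P_{A_o}` iff `L` is normal with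
respect to `P_B(M)` and the local observation `O_B = P_{B ∩ A_o}`. From local to global, project
everything onto `B`. From global to local, a word `u ∈ L` and an observation `O(y)` that agree on
`B ∩ A_o` are interleaved into a single word `v` with `P_B v = u` and `O v = O y`, which puts `y` in
`O⁻¹ O (P_B⁻¹ L)`.
-/

section

variable {A : Type*}

lemma proj_cons_of_mem {B : Set A} {a : A} (h : a ∈ B) (w : List A) :
    proj B (a :: w) = a :: proj B w := by
  simp [proj, h]

lemma proj_cons_of_notMem {B : Set A} {a : A} (h : a ∉ B) (w : List A) :
    proj B (a :: w) = proj B w := by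
  simp [proj, h]

lemma mem_of_mem_proj {B : Set A} {w : List A} {a : A} (h : a ∈ proj B w) : a ∈ B := by
  simpa [proj] using List.of_mem_filter h

lemma proj_eq_self {B : Set A} {w : List A} (h : ∀ a ∈ w, a ∈ B) : proj B w = w :=
  List.filter_eq_self.2 fun a ha => by simpa using h a ha

lemma proj_proj (B C : Set A) (w : List A) : proj B (proj C w) = proj (B ∩ C) w := by
  simp only [proj, List.filter_filter]
  exact List.filter_congr fun a _ => by by_cases hB : a ∈ B <;> by_cases hC : a ∈ C <;> simp [hB, hC]

lemma proj_proj_of_subset {B C : Set A} (h : C ⊆ B) (w : List A) :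
    proj C (proj B w) = proj C w := by
  rw [proj_proj, Set.inter_eq_left.2 h]

lemma exists_interleave_of_proj_eq {B C : Set A} {u z : List A} (hu : ∀ a ∈ u, a ∈ B)
    (hz : ∀ a ∈ z, a ∈ C) (h : proj C u = proj B z) : ∃ v, proj B v = u ∧ proj C v = z := by
  induction u generalizing z with
  | nil => exact ⟨z, h.symm, proj_eq_self hz⟩
  | cons b u ihu =>
    obtain ⟨hb, hu⟩ := List.forall_mem_cons.1 hu
    induction z with
    | nil => exact ⟨b :: u, proj_eq_self (List.forall_mem_cons.2 ⟨hb, hu⟩), h⟩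
    | cons c z ihz =>
      obtain ⟨hc, hz'⟩ := List.forall_mem_cons.1 hz
      by_cases hbC : b ∈ C
      · by_cases hcB : c ∈ B
        · rw [proj_cons_of_mem hbC, proj_cons_of_mem hcB, List.cons.injEq] at h
          obtain ⟨rfl, h⟩ := h
          obtain ⟨v, hvB, hvC⟩ := ihu hu hz' h
          exact ⟨b :: v, by rw [proj_cons_of_mem hb, hvB], by rw [proj_cons_of_mem hbC, hvC]⟩
        · rw [proj_cons_of_notMem hcB] at h
          obtain ⟨v, hvB, hvC⟩ := ihz hz' h
          exact ⟨c :: v, by rw [proj_cons_of_notMem hcB, hvB], by rw [proj_cons_of_mem hc, hvC]⟩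
      · rw [proj_cons_of_notMem hbC] at h
        obtain ⟨v, hvB, hvC⟩ := ihu hu hz h
        exact ⟨b :: v, by rw [proj_cons_of_mem hb, hvB], by rw [proj_cons_of_notMem hbC, hvC]⟩

theorem normalLang_preimage_proj_iff {B Ao : Set A} {L : Set (List A)} (M : Set (List A))
    (hL : ∀ w ∈ L, ∀ a ∈ w, a ∈ B) :
    normalLang Ao (proj B ⁻¹' L) M ↔ normalLang (B ∩ Ao) L (proj B '' M) := by
  constructor
  · rintro hN _ ⟨⟨u, huL, hu⟩, y, hyM, rfl⟩
    have hObs : proj Ao u = proj B (proj Ao y) :=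
      calc proj Ao u = proj Ao (proj B u) := by rw [proj_eq_self (hL u huL)]
        _ = proj (B ∩ Ao) u := by rw [proj_proj, Set.inter_comm]
        _ = proj (B ∩ Ao) (proj B y) := hu
        _ = proj (B ∩ Ao) y := proj_proj_of_subset Set.inter_subset_left y
        _ = proj B (proj Ao y) := (proj_proj B Ao y).symm
    obtain ⟨v, hvB, hvO⟩ :=
      exists_interleave_of_proj_eq (hL u huL) (fun _ ha => mem_of_mem_proj ha) hObs
    exact hN ⟨⟨v, by rwa [Set.mem_preimage, hvB], hvO⟩, hyM⟩
  · rintro hN w ⟨⟨v, hvL, hvw⟩, hwM⟩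
    refine hN ⟨⟨proj B v, hvL, ?_⟩, w, hwM, rfl⟩
    rw [proj_proj_of_subset Set.inter_subset_left, proj_proj_of_subset Set.inter_subset_left,
      ← proj_proj, ← proj_proj, hvw]

end

/-- Global mutual normality is equivalent to mutual normality. -/
theorem stmt14 {A : Type*} (A1 A2 Ao : Set A) (L1 L2 : Set (List A))
    (hW1 : ∀ w ∈ L1, ∀ a ∈ w, a ∈ A1) (hW2 : ∀ w ∈ L2, ∀ a ∈ w, a ∈ A2) :
    (proj Ao ⁻¹' (proj Ao '' (proj A1 ⁻¹' L1)) ∩ proj A2 ⁻¹' L2 ⊆ proj A1 ⁻¹' L1 ∧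
     proj Ao ⁻¹' (proj Ao '' (proj A2 ⁻¹' L2)) ∩ proj A1 ⁻¹' L1 ⊆ proj A2 ⁻¹' L2)
    ↔
    (proj (A1 ∩ Ao) ⁻¹' (proj (A1 ∩ Ao) '' L1) ∩ (proj A1 '' (proj A2 ⁻¹' L2)) ⊆ L1 ∧
     proj (A2 ∩ Ao) ⁻¹' (proj (A2 ∩ Ao) '' L2) ∩ (proj A2 '' (proj A1 ⁻¹' L1)) ⊆ L2) :=
  and_congr (normalLang_preimage_proj_iff _ hW1) (normalLang_preimage_proj_iff _ hW2)
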